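/- Let A be a C*-algebra and let a, b be positive elements of A. Then a ≾_s b (i.e. there exists a positive element a' ∈ A_b with a ∼_s a') if and only if there exists x ∈ A such that E_a = E_{x*x} and E_{x x*} ⊆ E_b. -/

import Mathlib

open Filter Topology

noncomputable section

variable {A : Type*}

/-- The hereditary subalgebra `A_a`: the norm-closure of `{a * x * a : x ∈ A}`. -/
def herSub [NonUnitalCStarAlgebra A] (a : A) : Set A :=
  closure {y : A | ∃ x : A, y = a * x * a}

/-- The right ideal `E_a`: the norm-closure of `{a * x : x ∈ A}`. -/
def rightIdeal [NonUnitalCStarAlgebra A] (a : A) : Set A :=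
  closure {y : A | ∃ x : A, y = a * x}

/-- Pedersen equivalence: `a = x* x` and `b = x x*` for some `x`. -/
def PedersenEquiv [NonUnitalCStarAlgebra A] (a b : A) : Prop :=
  ∃ x : A, a = star x * x ∧ b = x * star x

/-- Blackadar equivalence `a ∼ₛ b`: there is `x ∈ A` with `A_a = A_{x*x}` and `A_b = A_{xx*}`. -/
def BlackadarEquiv [NonUnitalCStarAlgebra A] (a b : A) : Prop :=
  ∃ x : A, herSub a = herSub (star x * x) ∧ herSub b = herSub (x * star x)

/-- Blackadar subequivalence `a ≾ₛ b`: there is a positive `a' ∈ A_b` with `a ∼ₛ a'`. -/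
def BlackadarLe [NonUnitalCStarAlgebra A] [PartialOrder A] (a b : A) : Prop :=
  ∃ a' : A, 0 ≤ a' ∧ a' ∈ herSub b ∧ BlackadarEquiv a a'

/-- Cuntz subequivalence `a ≾ b`: there is a sequence `xₙ` with `‖xₙ* b xₙ - a‖ → 0`. -/
def CuntzLe [NonUnitalCStarAlgebra A] (a b : A) : Prop :=
  ∃ x : ℕ → A, Tendsto (fun n => ‖star (x n) * b * x n - a‖) atTop (𝓝 0)

/-- Cuntz equivalence `a ≈ b`. -/
def CuntzEquiv [NonUnitalCStarAlgebra A] (a b : A) : Prop :=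
  CuntzLe a b ∧ CuntzLe b a

/-- Compact containment `a ⊂⊂ b`: there is a positive `e ∈ A_b` with `e * a = a`. -/
def CpctContained [NonUnitalCStarAlgebra A] [PartialOrder A] (a b : A) : Prop :=
  ∃ e : A, 0 ≤ e ∧ e ∈ herSub b ∧ e * a = a

/-! For self-adjoint `c` and `d`, the inclusions `A_c ⊆ A_d` and `E_c ⊆ E_d` are equivalent: each
says that `c` lies in the corresponding closed set, and an element `y` with `y, y* ∈ E_d` lies in
`A_d`, since `eₙ y eₙ → y` along the approximate unit `eₙ = d gₙ(d)`, `gₙ(t) = t / (t² + δₙ²)`,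
`δₙ → 0`. Under this dictionary `a ≾ₛ b` with witness `x` turns into the right ideal condition,
and conversely `a' = x x*` witnesses `a ≾ₛ b`. -/

lemma tendsto_mul_mul_of_norm_le_one {R ι : Type*} [NonUnitalNormedRing R] {l : Filter ι}
    {e : ι → R} {y : R} (he : ∀ i, ‖e i‖ ≤ 1) (hl : Tendsto (fun i => e i * y) l (𝓝 y))
    (hr : Tendsto (fun i => y * e i) l (𝓝 y)) :
    Tendsto (fun i => e i * y * e i) l (𝓝 y) := by
  rw [tendsto_iff_norm_sub_tendsto_zero] at hl hr ⊢
  refine squeeze_zero (fun _ => norm_nonneg _) (fun i => ?_) (by simpa using hr.add hl)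
  calc ‖e i * y * e i - y‖ = ‖e i * (y * e i - y) + (e i * y - y)‖ := by noncomm_ring
    _ ≤ ‖e i‖ * ‖y * e i - y‖ + ‖e i * y - y‖ := norm_add_le_of_le (norm_mul_le _ _) le_rfl
    _ ≤ ‖y * e i - y‖ + ‖e i * y - y‖ := by
      gcongr; exact mul_le_of_le_one_left (norm_nonneg _) (he i)

section

variable [NonUnitalCStarAlgebra A]

lemma herSub_subset_rightIdeal (b : A) : herSub b ⊆ rightIdeal b :=
  closure_mono fun _ ⟨x, hx⟩ => ⟨x * b, by rw [hx, mul_assoc]⟩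

lemma mul_mem_rightIdeal {b y : A} (hy : y ∈ rightIdeal b) (c : A) : y * c ∈ rightIdeal b :=
  map_mem_closure (f := (· * c)) (continuous_mul_const c) hy fun _ ⟨x, hx⟩ =>
    ⟨x * c, by rw [hx]; exact mul_assoc _ _ _⟩

lemma rightIdeal_subset_of_mem {b c : A} (hc : c ∈ rightIdeal b) : rightIdeal c ⊆ rightIdeal b :=
  closure_minimal (fun _ ⟨x, hx⟩ => hx ▸ mul_mem_rightIdeal hc x) isClosed_closure

lemma mul_mul_mem_herSub {b u v : A} (hu : u ∈ herSub b) (hv : v ∈ herSub b) (x : A) :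
    u * x * v ∈ herSub b := by
  refine map_mem_closure₂ (f := fun u v : A => u * x * v) (by fun_prop) hu hv ?_
  rintro _ ⟨p, rfl⟩ _ ⟨q, rfl⟩
  exact ⟨p * b * x * b * q, by simp only [mul_assoc]⟩

lemma herSub_subset_of_mem {b c : A} (hc : c ∈ herSub b) : herSub c ⊆ herSub b :=
  closure_minimal (fun _ ⟨x, hx⟩ => hx ▸ mul_mul_mem_herSub hc hc x) isClosed_closure

lemma IsSelfAdjoint.exists_approxUnit {b : A} (hb : IsSelfAdjoint b) {δ : ℝ} (hδ : 0 < δ) :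
    ∃ w : A, Commute b w ∧ IsSelfAdjoint (b * w) ∧ ‖b * w‖ ≤ 1 ∧ ‖b * w * b - b‖ ≤ δ := by
  set g : ℝ → ℝ := fun t => t / (t ^ 2 + δ ^ 2) with hg_def
  have hpos : ∀ t : ℝ, 0 < t ^ 2 + δ ^ 2 := fun t => by positivity
  have hg : Continuous g := continuous_id.div (by fun_prop) fun t => (hpos t).ne'
  have hg0 : g 0 = 0 := by simp [g]
  have hbw : b * cfcₙ g b = cfcₙ (fun t => t * g t) b := by
    rw [cfcₙ_mul (fun t => t) g b continuousOn_id rfl hg.continuousOn hg0, cfcₙ_id' ℝ b]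
  have hcomm : Commute b (cfcₙ g b) := by
    simpa only [cfcₙ_id' ℝ b] using cfcₙ_commute_cfcₙ (fun t : ℝ => t) g b
  refine ⟨cfcₙ g b, hcomm, (hb.commute_iff (cfcₙ_predicate g b)).1 hcomm, ?_, ?_⟩
  · rw [hbw]
    refine norm_cfcₙ_le fun t _ => ?_
    rw [hg_def, mul_div_assoc', ← sq, norm_div, Real.norm_of_nonneg (sq_nonneg t),
      Real.norm_of_nonneg (hpos t).le, div_le_one (hpos t)]
    nlinarith
  · have hbwb : b * cfcₙ g b * b - b = cfcₙ (fun t => t * g t * t - t) b := by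
      rw [cfcₙ_sub (fun t => t * g t * t) (fun t => t) b
          ((continuous_id.mul hg).mul continuous_id).continuousOn (by simp [hg0]),
        cfcₙ_mul (fun t => t * g t) (fun t => t) b (continuous_id.mul hg).continuousOn
          (by simp [hg0]), cfcₙ_id' ℝ b, hbw]
    rw [hbwb]
    refine norm_cfcₙ_le fun t _ => ?_
    have hgt : t * g t * t - t = -(δ ^ 2 * t / (t ^ 2 + δ ^ 2)) := by
      rw [hg_def]; field_simp [(hpos t).ne']; ring
    rw [hgt, norm_neg, norm_div, norm_mul, Real.norm_of_nonneg (hpos t).le,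
      Real.norm_of_nonneg (sq_nonneg δ), Real.norm_eq_abs, div_le_iff₀ (hpos t)]
    nlinarith [two_mul_le_add_sq |t| δ, sq_abs t, abs_nonneg t]

lemma IsSelfAdjoint.exists_seq_approxUnit {b : A} (hb : IsSelfAdjoint b) :
    ∃ w : ℕ → A, (∀ n, Commute b (w n)) ∧ (∀ n, IsSelfAdjoint (b * w n)) ∧
      (∀ n, ‖b * w n‖ ≤ 1) ∧ Tendsto (fun n => b * w n * b) atTop (𝓝 b) := by
  choose w hcomm hsa hnorm hdist using
    fun n : ℕ => hb.exists_approxUnit (δ := 1 / (n + 1)) Nat.one_div_pos_of_nat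
  refine ⟨w, hcomm, hsa, hnorm, tendsto_iff_norm_sub_tendsto_zero.2 ?_⟩
  exact squeeze_zero (fun _ => norm_nonneg _) hdist tendsto_one_div_add_atTop_nhds_zero_nat

lemma tendsto_mul_of_mem_rightIdeal {ι : Type*} {l : Filter ι} {b y : A} {e : ι → A}
    (he : ∀ i, ‖e i‖ ≤ 1) (heb : Tendsto (fun i => e i * b) l (𝓝 b)) (hy : y ∈ rightIdeal b) :
    Tendsto (fun i => e i * y) l (𝓝 y) := by
  have hlip : ∀ i, LipschitzWith 1 (e i * ·) := fun i => LipschitzWith.of_dist_le_mul fun x z => by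
    rw [dist_eq_norm, dist_eq_norm, ← mul_sub, NNReal.coe_one]
    exact (norm_mul_le _ _).trans (mul_le_mul_of_nonneg_right (he i) (norm_nonneg _))
  have hclosed : IsClosed {y : A | Tendsto (fun i => e i * y) l (𝓝 y)} :=
    (LipschitzWith.uniformEquicontinuous _ 1 hlip).equicontinuous.isClosed_setOfPred_tendsto
      continuous_id
  refine closure_minimal ?_ hclosed hy
  rintro _ ⟨u, rfl⟩
  simpa only [Set.mem_ofPred_eq, mul_assoc] using heb.mul_const u

lemma mem_rightIdeal_self {b : A} (hb : IsSelfAdjoint b) : b ∈ rightIdeal b := by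
  obtain ⟨w, -, -, -, hw⟩ := hb.exists_seq_approxUnit
  exact mem_closure_of_tendsto hw (.of_forall fun n => ⟨w n * b, mul_assoc _ _ _⟩)

lemma mem_herSub_of_mem_rightIdeal {b y : A} (hb : IsSelfAdjoint b) (hy : y ∈ rightIdeal b)
    (hy' : star y ∈ rightIdeal b) : y ∈ herSub b := by
  obtain ⟨w, hcomm, hsa, hnorm, hw⟩ := hb.exists_seq_approxUnit
  have hleft := tendsto_mul_of_mem_rightIdeal hnorm hw hy
  have hright : Tendsto (fun n => y * (b * w n)) atTop (𝓝 y) := by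
    simpa only [Function.comp_def, star_mul, star_star, (hsa _).star_eq] using
      (continuous_star.tendsto _).comp (tendsto_mul_of_mem_rightIdeal hnorm hw hy')
  refine mem_closure_of_tendsto (tendsto_mul_mul_of_norm_le_one hnorm hleft hright)
    (.of_forall fun n => ⟨w n * y * w n, ?_⟩)
  nth_rw 2 [(hcomm n).eq]
  simp only [mul_assoc]

lemma mem_herSub_self {b : A} (hb : IsSelfAdjoint b) : b ∈ herSub b :=
  mem_herSub_of_mem_rightIdeal hb (mem_rightIdeal_self hb)
    (by rw [hb.star_eq]; exact mem_rightIdeal_self hb)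

lemma herSub_subset_iff_rightIdeal_subset {c d : A} (hc : IsSelfAdjoint c)
    (hd : IsSelfAdjoint d) : herSub c ⊆ herSub d ↔ rightIdeal c ⊆ rightIdeal d := by
  constructor
  · intro h
    exact rightIdeal_subset_of_mem (herSub_subset_rightIdeal d (h (mem_herSub_self hc)))
  · intro h
    have hcd : c ∈ rightIdeal d := h (mem_rightIdeal_self hc)
    exact herSub_subset_of_mem (mem_herSub_of_mem_rightIdeal hd hcd (by rwa [hc.star_eq]))

lemma herSub_eq_iff_rightIdeal_eq {c d : A} (hc : IsSelfAdjoint c) (hd : IsSelfAdjoint d) :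
    herSub c = herSub d ↔ rightIdeal c = rightIdeal d := by
  simp only [subset_antisymm_iff, herSub_subset_iff_rightIdeal_subset hc hd,
    herSub_subset_iff_rightIdeal_subset hd hc]

end

/-- `a ≾ₛ b` iff there is `x ∈ A` with `E_a = E_{x*x}` and `E_{xx*} ⊆ E_b`. -/
theorem blackadarLe_iff_rightIdeal [NonUnitalCStarAlgebra A] [PartialOrder A]
    [StarOrderedRing A] (a b : A) (ha : 0 ≤ a) (hb : 0 ≤ b) :
    BlackadarLe a b ↔
      ∃ x : A, rightIdeal a = rightIdeal (star x * x) ∧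
        rightIdeal (x * star x) ⊆ rightIdeal b := by
  have hsa (x : A) : IsSelfAdjoint (star x * x) ∧ IsSelfAdjoint (x * star x) :=
    ⟨.star_mul_self x, .mul_star_self x⟩
  constructor
  · rintro ⟨a', -, ha'b, x, hax, ha'x⟩
    refine ⟨x, (herSub_eq_iff_rightIdeal_eq ha.isSelfAdjoint (hsa x).1).1 hax, ?_⟩
    rw [← herSub_subset_iff_rightIdeal_subset (hsa x).2 hb.isSelfAdjoint, ← ha'x]
    exact herSub_subset_of_mem ha'b
  · rintro ⟨x, hax, hxb⟩
    refine ⟨x * star x, mul_star_self_nonneg x, ?_,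
      x, (herSub_eq_iff_rightIdeal_eq ha.isSelfAdjoint (hsa x).1).2 hax, rfl⟩
    exact (herSub_subset_iff_rightIdeal_subset (hsa x).2 hb.isSelfAdjoint).2 hxb
      (mem_herSub_self (hsa x).2)
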